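/- arXiv:2403.17666 — 2 statements merged into one kernel-verified Lean document; each statement's English description precedes it below -/
import Mathlib

section
/- Let K = ℚ(√2) and let Φ(x₁,...,x₅) = x₁² + x₂² + x₃² - √2·x₄² - √2·x₅² be a quadratic form with coefficients in K. If x₁,...,x₅ ∈ K satisfy Φ(x₁,...,x₅) = 0, then x₁ = x₂ = x₃ = x₄ = x₅ = 0. In other words, Φ does not represent 0 over K non-trivially. -/
/-!
The conjugation `√2 ↦ -√2` is a `ℚ`-embedding `σ` of `ℚ(√2)` into `ℝ`. It carries `Φ` to the
positive definite form `x₁² + x₂² + x₃² + √2·x₄² + √2·x₅²`, so `σ` kills every coordinate of a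
zero of `Φ`; since field embeddings are injective, the zero is trivial.
-/

open IntermediateField Polynomial

theorem minpoly_sqrt_two : minpoly ℚ √2 = X ^ 2 - C 2 := by
  have hirr : Irreducible (X ^ 2 - C 2 : ℚ[X]) := by
    refine X_pow_sub_C_irreducible_of_prime Nat.prime_two fun q hq =>
      irrational_sqrt_two ⟨|q|, ?_⟩
    rw [Rat.cast_abs, ← Real.sqrt_sq_eq_abs, ← Rat.cast_pow, hq]
    norm_num
  refine (minpoly.eq_of_irreducible_of_monic hirr ?_ (monic_X_pow_sub_C 2 two_ne_zero)).symm
  simp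

theorem exists_algHom_adjoin_sqrt_two_neg :
    ∃ σ : ℚ⟮√2⟯ →ₐ[ℚ] ℝ, σ (AdjoinSimple.gen ℚ √2) = -√2 := by
  have hint : IsIntegral ℚ √2 := ⟨X ^ 2 - C 2, monic_X_pow_sub_C 2 two_ne_zero, by simp⟩
  refine ⟨(algHomAdjoinIntegralEquiv ℚ hint).symm ⟨-√2, ?_⟩,
    algHomAdjoinIntegralEquiv_symm_apply_gen ℚ hint _⟩
  rw [mem_aroots, minpoly_sqrt_two]
  exact ⟨(monic_X_pow_sub_C 2 two_ne_zero).ne_zero, by simp⟩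

theorem eq_zero_of_sq_add_sq_add_sq_add_mul_sq_add_mul_sq_eq_zero {R : Type*} [Field R]
    [LinearOrder R] [IsStrictOrderedRing R] {c a b d e f : R} (hc : 0 < c)
    (h : a ^ 2 + b ^ 2 + d ^ 2 + c * e ^ 2 + c * f ^ 2 = 0) :
    a = 0 ∧ b = 0 ∧ d = 0 ∧ e = 0 ∧ f = 0 := by
  have hce := mul_nonneg hc.le (sq_nonneg e)
  have hcf := mul_nonneg hc.le (sq_nonneg f)
  have : a ^ 2 = 0 ∧ b ^ 2 = 0 ∧ d ^ 2 = 0 ∧ c * e ^ 2 = 0 ∧ c * f ^ 2 = 0 := by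
    refine ⟨?_, ?_, ?_, ?_, ?_⟩ <;> linarith [sq_nonneg a, sq_nonneg b, sq_nonneg d]
  simpa [hc.ne'] using this

/-- The quadratic form `x₁² + x₂² + x₃² - √2·x₄² - √2·x₅²` does not represent `0`
non-trivially over the field `K = ℚ(√2)`. -/
theorem quadratic_form_anisotropic_over_Q_sqrt2
    (x₁ x₂ x₃ x₄ x₅ : ℝ)
    (h₁ : x₁ ∈ IntermediateField.adjoin ℚ {Real.sqrt 2})
    (h₂ : x₂ ∈ IntermediateField.adjoin ℚ {Real.sqrt 2})
    (h₃ : x₃ ∈ IntermediateField.adjoin ℚ {Real.sqrt 2})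
    (h₄ : x₄ ∈ IntermediateField.adjoin ℚ {Real.sqrt 2})
    (h₅ : x₅ ∈ IntermediateField.adjoin ℚ {Real.sqrt 2})
    (h : x₁ ^ 2 + x₂ ^ 2 + x₃ ^ 2 - Real.sqrt 2 * x₄ ^ 2 - Real.sqrt 2 * x₅ ^ 2 = 0) :
    x₁ = 0 ∧ x₂ = 0 ∧ x₃ = 0 ∧ x₄ = 0 ∧ x₅ = 0 := by
  obtain ⟨σ, hσ⟩ := exists_algHom_adjoin_sqrt_two_neg
  set y₁ : ℚ⟮√2⟯ := ⟨x₁, h₁⟩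
  set y₂ : ℚ⟮√2⟯ := ⟨x₂, h₂⟩
  set y₃ : ℚ⟮√2⟯ := ⟨x₃, h₃⟩
  set y₄ : ℚ⟮√2⟯ := ⟨x₄, h₄⟩
  set y₅ : ℚ⟮√2⟯ := ⟨x₅, h₅⟩
  set s := AdjoinSimple.gen ℚ √2
  have hK : y₁ ^ 2 + y₂ ^ 2 + y₃ ^ 2 - s * y₄ ^ 2 - s * y₅ ^ 2 = 0 := Subtype.ext h
  have hconj : σ y₁ ^ 2 + σ y₂ ^ 2 + σ y₃ ^ 2 + √2 * σ y₄ ^ 2 + √2 * σ y₅ ^ 2 = 0 := by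
    simpa [hσ, sub_eq_add_neg] using congrArg σ hK
  have hσy := eq_zero_of_sq_add_sq_add_sq_add_mul_sq_add_mul_sq_eq_zero (by positivity) hconj
  simpa [y₁, y₂, y₃, y₄, y₅, Subtype.ext_iff] using hσy
end

section
/- Let G be a group, N ⊴ G a normal subgroup, and suppose both N and the quotient G/N are finitely presented. Then G is finitely presented. -/
/-!
Write `N = ⟨A | S⟩` and `G ⧸ N = ⟨B | T⟩`. Sending `A` to the corresponding elements of `N` and
`B` to lifts in `G` of the generators of `G ⧸ N` gives a surjection `φ : F(A ⊔ B) → G`. Each lift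
`t` of a relator in `T`, and each conjugate `g a g⁻¹` of some `a ∈ A` by a generator `g` or its
inverse, is mapped into `N`, hence agrees under `φ` with some word `w` in `A`. Let `K` be the normal
closure of `S` and of these finitely many relators `t w⁻¹`, `g a g⁻¹ w⁻¹`. Modulo `K` the
subgroup generated by `A` is normal, so `K⟨A⟩` is a normal subgroup in which the lifts of `T`
lie; it therefore contains `ker φ`. On `⟨A⟩` the map `φ` is the presentation map of `N`, whose
kernel is normally generated by `S`; hence `ker φ = K`.
-/

/-- A group is finitely presented if it is isomorphic to the quotient of a finitely
generated free group by the normal closure of finitely many relations. -/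
def FinitelyPresentedGroup (G : Type*) [Group G] : Prop :=
  ∃ (n : ℕ) (rels : Set (FreeGroup (Fin n))), rels.Finite ∧ Nonempty (PresentedGroup rels ≃* G)

open Subgroup Function FreeGroup

theorem finitelyPresentedGroup_iff {G : Type*} [Group G] :
    FinitelyPresentedGroup G ↔ Group.IsFinitelyPresented G := by
  constructor
  · rintro ⟨n, rels, hrels, ⟨e⟩⟩
    have : Finite rels := hrels.to_subtype
    exact .equiv e
  · intro _
    obtain ⟨n, rels, hrels, ⟨e⟩⟩ :=
      Group.IsFinitelyPresented.exists_mulEquiv_presentedGroup (G := G)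
    exact ⟨n, rels, hrels, ⟨e.symm⟩⟩

namespace Subgroup

variable {G : Type*} [Group G]

theorem normal_of_conj_mem {s : Set G} (hs : closure s = ⊤) {H : Subgroup G}
    (h : ∀ g ∈ s ∪ s⁻¹, ∀ x ∈ H, g * x * g⁻¹ ∈ H) : H.Normal := by
  rw [← normalizer_eq_top_iff, eq_top_iff, ← hs, closure_le]
  intro g hg x
  refine ⟨h g (.inl hg) x, fun hx => ?_⟩
  simpa [mul_assoc] using h g⁻¹ (.inr (Set.inv_mem_inv.2 hg)) _ hx

theorem normal_sup_closure_of_conj_mem (K : Subgroup G) [K.Normal] {s A : Set G}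
    (hs : closure s = ⊤)
    (h : ∀ g ∈ s ∪ s⁻¹, ∀ a ∈ A, g * a * g⁻¹ ∈ K ⊔ closure A) : (K ⊔ closure A).Normal := by
  refine normal_of_conj_mem hs fun g hg => ?_
  suffices K ⊔ closure A ≤ (K ⊔ closure A).comap (MulAut.conj g).toMonoidHom from
    fun x hx => this hx
  refine sup_le (fun k hk => mem_sup_left (Normal.conj_mem ‹_› k hk g)) ?_
  exact (closure_le _).2 (h g hg)

theorem exists_finite_subset_of_subset_sup {E L : Subgroup G} [E.Normal] {X : Set G}
    (hX : X.Finite) (hXEL : X ⊆ ↑(E ⊔ L)) :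
    ∃ R ⊆ (E : Set G), R.Finite ∧ X ⊆ ↑(closure R ⊔ L) := by
  have (x : X) : ∃ e ∈ E, e⁻¹ * x ∈ L := by
    obtain ⟨e, he, l, hl, hx⟩ := mem_sup_of_normal_left.1 (hXEL x.2)
    exact ⟨e, he, by simpa [← hx]⟩
  choose e heE heL using this
  have := hX.to_subtype
  refine ⟨Set.range e, Set.range_subset_iff.2 heE, Set.finite_range e, fun x hx => ?_⟩
  simpa using mul_mem_sup (subset_closure (Set.mem_range_self (f := e) ⟨x, hx⟩)) (heL ⟨x, hx⟩)

end Subgroup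

namespace FreeGroup

variable {α β : Type*}

def projRight : FreeGroup (α ⊕ β) →* FreeGroup β :=
  FreeGroup.lift (Sum.elim 1 of)

theorem projRight_map_inr (x : FreeGroup β) : projRight (map (Sum.inr : β → α ⊕ β) x) = x := by
  have : projRight.comp (map (Sum.inr : β → α ⊕ β)) = MonoidHom.id _ :=
    ext_hom _ _ fun b => by simp [projRight]
  exact DFunLike.congr_fun this x

theorem comap_projRight_normalClosure_le (T : Set (FreeGroup β)) :
    (normalClosure T).comap (projRight (α := α)) ≤
      normalClosure (Set.range (fun a => of (Sum.inl a)) ∪ map Sum.inr '' T) := by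
  set P := normalClosure (Set.range (fun a => of (Sum.inl a)) ∪ map (Sum.inr : β → α ⊕ β) '' T)
  have hσ : (QuotientGroup.mk' P).comp ((map Sum.inr).comp projRight) = QuotientGroup.mk' P := by
    refine ext_hom _ _ fun
      | .inl a => ?_
      | .inr b => by simp [projRight]
    have : of (Sum.inl a) ∈ P := subset_normalClosure (.inl ⟨a, rfl⟩)
    simp [projRight, (QuotientGroup.eq_one_iff _).2 this]
  intro x hx
  have hxT : map Sum.inr (projRight x) ∈ P :=
    normalClosure_mono Set.subset_union_right (map_normalClosure_le _ _ ⟨_, hx, rfl⟩)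
  exact (QuotientGroup.eq_one_iff x).1
    ((DFunLike.congr_fun hσ x).symm.trans ((QuotientGroup.eq_one_iff _).2 hxT))

variable (α) in
/-- Left-hand sides of the relators `t = w` and `g a g⁻¹ = w` of the extension (`t ∈ T` lifted,
`g` a generator or its inverse, `a ∈ α`), whose right-hand sides `w` are words in `α`. -/
def extensionRelatorLhs (T : Set (FreeGroup β)) : Set (FreeGroup (α ⊕ β)) :=
  map Sum.inr '' T ∪
    Set.image2 (fun g a => g * of (Sum.inl a) * g⁻¹) (Set.range of ∪ (Set.range of)⁻¹) Set.univ

theorem extensionRelatorLhs_finite [Finite α] [Finite β] {T : Set (FreeGroup β)}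
    (hT : T.Finite) : (extensionRelatorLhs α T).Finite :=
  (hT.image _).union (((Set.finite_range of).union (Set.finite_range of).inv).image2 _
    (Set.finite_univ (α := α)))

end FreeGroup

section Extension

variable {G : Type*} [Group G] {N : Subgroup G} [N.Normal] {α β : Type*}
  (ψ : FreeGroup α →* N) (χ : FreeGroup β →* G ⧸ N)

noncomputable def extensionHom : FreeGroup (α ⊕ β) →* G :=
  FreeGroup.lift (Sum.elim (fun a => (ψ (of a) : G)) (fun b => (χ (of b)).out))

theorem extensionHom_comp_map_inl :
    (extensionHom ψ χ).comp (map Sum.inl) = N.subtype.comp ψ :=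
  ext_hom _ _ fun a => by simp [extensionHom]

theorem extensionHom_map_inl (z : FreeGroup α) : extensionHom ψ χ (map Sum.inl z) = ψ z :=
  DFunLike.congr_fun (extensionHom_comp_map_inl ψ χ) z

theorem mk_extensionHom (x : FreeGroup (α ⊕ β)) :
    (extensionHom ψ χ x : G ⧸ N) = χ (projRight x) := by
  have : (QuotientGroup.mk' N).comp (extensionHom ψ χ) = χ.comp projRight :=
    ext_hom _ _ fun x => by cases x <;> simp [extensionHom, projRight]
  exact DFunLike.congr_fun this x

variable {ψ χ}

theorem extensionHom_surjective (hψ : Surjective ψ) (hχ : Surjective χ) :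
    Surjective (extensionHom ψ χ) := by
  intro g
  obtain ⟨v, hv⟩ := hχ g
  set u := map Sum.inr v
  have hu : (extensionHom ψ χ u)⁻¹ * g ∈ N := by
    rw [← QuotientGroup.eq, mk_extensionHom, projRight_map_inr, hv]
  obtain ⟨z, hz⟩ := hψ ⟨_, hu⟩
  exact ⟨u * map Sum.inl z, by simp [extensionHom_map_inl, hz]⟩

theorem map_range_map_inl_extensionHom (hψ : Surjective ψ) :
    (map Sum.inl).range.map (extensionHom ψ χ) = N := by
  rw [← MonoidHom.range_comp, extensionHom_comp_map_inl, MonoidHom.range_comp,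
    MonoidHom.range_eq_top.2 hψ, ← MonoidHom.range_eq_map, range_subtype]

theorem extensionRelatorLhs_subset_comap {T : Set (FreeGroup β)}
    (hT : normalClosure T = χ.ker) :
    extensionRelatorLhs α T ⊆ N.comap (extensionHom ψ χ) := by
  rintro _ (⟨t, ht, rfl⟩ | ⟨g, -, a, -, rfl⟩)
  · rw [SetLike.mem_coe, mem_comap, ← QuotientGroup.eq_one_iff, mk_extensionHom,
      projRight_map_inr, ← MonoidHom.mem_ker, ← hT]
    exact subset_normalClosure ht
  · simpa [extensionHom] using Normal.conj_mem ‹_› _ (ψ (of a)).2 (extensionHom ψ χ g)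

theorem ker_extensionHom_eq {T : Set (FreeGroup β)} (hT : normalClosure T = χ.ker)
    {K : Subgroup (FreeGroup (α ⊕ β))} [K.Normal] (hK : K ≤ (extensionHom ψ χ).ker)
    (hψK : ψ.ker.map (map Sum.inl) ≤ K)
    (hTK : extensionRelatorLhs α T ⊆ ↑(K ⊔ (map Sum.inl).range)) :
    (extensionHom ψ χ).ker = K := by
  have hL : (map Sum.inl).range = closure (Set.range fun a : α => of (Sum.inl a : α ⊕ β)) := by
    rw [range_map, ← Set.range_comp]; rfl
  set L := (map (Sum.inl : α → α ⊕ β)).range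
  have hP : (K ⊔ L).Normal := by
    rw [hL] at hTK ⊢
    exact normal_sup_closure_of_conj_mem K (closure_range_of _) fun g hg _ ⟨a, ha⟩ =>
      ha ▸ hTK (.inr ⟨g, hg, a, trivial, rfl⟩)
  have hNP : N.comap (extensionHom ψ χ) ≤ K ⊔ L := by
    intro x hx
    have hxT : projRight x ∈ normalClosure T := by
      rwa [hT, MonoidHom.mem_ker, ← mk_extensionHom, QuotientGroup.eq_one_iff]
    refine normalClosure_le_normal (Set.union_subset ?_ fun _ ht => hTK (.inl ht))
      (comap_projRight_normalClosure_le T hxT)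
    rintro _ ⟨a, rfl⟩
    exact mem_sup_right ⟨of a, map.of⟩
  refine le_antisymm (fun x hx => ?_) hK
  obtain ⟨k, hk, _, ⟨z, rfl⟩, rfl⟩ :=
    mem_sup_of_normal_left.1 (hNP (MonoidHom.ker_le_comap _ _ hx))
  have hz : ψ z = 1 := by
    rw [MonoidHom.mem_ker, _root_.map_mul, MonoidHom.mem_ker.1 (hK hk), one_mul,
      extensionHom_map_inl] at hx
    exact Subtype.ext hx
  exact mul_mem hk (hψK ⟨z, hz, rfl⟩)

end Extension

theorem Group.IsFinitelyPresented.of_normal_of_quotient {G : Type*} [Group G] (N : Subgroup G)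
    [N.Normal] [hN : Group.IsFinitelyPresented N] [hQ : Group.IsFinitelyPresented (G ⧸ N)] :
    Group.IsFinitelyPresented G := by
  obtain ⟨m, ψ, hψ, S, hSfin, hS⟩ := hN
  obtain ⟨n, χ, hχ, T, hTfin, hT⟩ := hQ
  have hX :
      extensionRelatorLhs (Fin m) T ⊆ ↑((extensionHom ψ χ).ker ⊔ (map Sum.inl).range) := by
    rw [sup_comm, ← comap_map_eq, map_range_map_inl_extensionHom hψ]
    exact extensionRelatorLhs_subset_comap hT
  obtain ⟨R, hRker, hRfin, hXR⟩ :=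
    exists_finite_subset_of_subset_sup (extensionRelatorLhs_finite hTfin) hX
  refine of_surjective _ (extensionHom_surjective hψ hχ) ⟨map Sum.inl '' S ∪ R,
    (hSfin.image _).union hRfin, (ker_extensionHom_eq hT ?_ ?_ (hXR.trans ?_)).symm⟩
  · refine normalClosure_le_normal (Set.union_subset ?_ hRker)
    rintro _ ⟨s, hs, rfl⟩
    have : ψ s = 1 := MonoidHom.mem_ker.1 (hS ▸ subset_normalClosure hs)
    rw [SetLike.mem_coe, MonoidHom.mem_ker, extensionHom_map_inl, this, OneMemClass.coe_one]
  · rw [← hS]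
    exact (map_normalClosure_le _ _).trans (normalClosure_mono Set.subset_union_left)
  · exact sup_le_sup_right (closure_le_normalClosure.trans
      (normalClosure_mono Set.subset_union_right)) _

/-- Finite presentability is closed under extensions: if a normal subgroup `N ⊴ G` and the
quotient `G/N` are both finitely presented, then so is `G`. -/
theorem finitelyPresented_of_normal_of_quotient {G : Type*} [Group G]
    (N : Subgroup G) [N.Normal]
    (hN : FinitelyPresentedGroup N) (hQ : FinitelyPresentedGroup (G ⧸ N)) :
    FinitelyPresentedGroup G := by
  rw [finitelyPresentedGroup_iff] at hN hQ ⊢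
  exact .of_normal_of_quotient N
end
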